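/- Under the stated assumptions (case Φ = 3π/2), the function v̂₁(w) := m(w) + Q(w) − Ĝ(w), where Ĝ(w) = iω·sinh(w − 3πi/2)/(iω·sinh w + k), has a simple pole at −p₁ + πi with residue −2i; precisely, (w − (−p₁ + πi))·(m(w) + Q(w) − Ĝ(w)) tends to −2i as w → −p₁ + πi (w ≠ −p₁ + πi). -/

import Mathlib

/-!
At `a = -p₁ + πi` the three pieces of `v̂₁` have simple poles whose residues are computed
separately, each as `f(a) / g'(a)` for a quotient `f / g` with a simple zero of `g` at `a`.
Since `sinh a = sinh p₁` and `cosh a = -cosh p₁`, the denominators of `m` and `Ĝ` vanish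
at `a`, giving residues `p₁/(3π) - i/6` and `i`. Of the six `coth` terms of `Q` only
`coth ((w - a) / 3)` is singular at `a` (residue `3`); the others are regular because
`Re p₁ ≠ 0`, so `Q` contributes `-(i - m₁) = -p₁/(3π) - 5i/6`. The sum is `-2i`.
-/

open Complex Filter Topology

/-- The complex hyperbolic cotangent. -/
noncomputable def Complex.coth (z : ℂ) : ℂ := Complex.cosh z / Complex.sinh z

open scoped Real

namespace Complex

lemma sinh_ne_zero_of_re_ne_zero {z : ℂ} (hz : z.re ≠ 0) : sinh z ≠ 0 := by
  intro h
  obtain ⟨n, hn⟩ := sin_eq_zero_iff.mp (by rw [sin_mul_I, h, zero_mul] : sin (z * I) = 0)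
  exact hz (by simpa using congrArg im hn)

lemma sinh_ofReal_mul_I_ne_zero {x : ℝ} (h₀ : 0 < x) (hπ : x < π) : sinh (x * I) ≠ 0 := by
  rw [sinh_mul_I, ← ofReal_sin]
  exact mul_ne_zero (ofReal_ne_zero.mpr (Real.sin_pos_of_pos_of_lt_pi h₀ hπ).ne') I_ne_zero

lemma continuousAt_coth {z : ℂ} (hz : sinh z ≠ 0) : ContinuousAt coth z :=
  continuous_cosh.continuousAt.div continuous_sinh.continuousAt hz

lemma sinh_neg_add_pi_mul_I (z : ℂ) : sinh (-z + π * I) = sinh z := by simp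

lemma cosh_neg_add_pi_mul_I (z : ℂ) : cosh (-z + π * I) = -cosh z := by simp

lemma sinh_neg_add_pi_mul_I_sub_three_pi_mul_I_div_two (z : ℂ) :
    sinh (-z + π * I - 3 * π * I / 2) = -I * cosh z := by
  have h : -z + π * I - 3 * π * I / 2 = -(z + (π / 2 : ℝ) * I) := by push_cast; ring
  rw [h, sinh_neg, sinh_add, sinh_mul_I, cosh_mul_I, ← ofReal_sin, ← ofReal_cos,
    Real.sin_pi_div_two, Real.cos_pi_div_two]
  simp [mul_comm]

end Complex

section Residues

variable {𝕜 : Type*} [NontriviallyNormedField 𝕜]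

lemma tendsto_sub_mul_nhdsNE_zero {f : 𝕜 → 𝕜} {a : 𝕜} (hf : ContinuousAt f a) :
    Tendsto (fun w => (w - a) * f w) (𝓝[≠] a) (𝓝 0) := by
  have hsub : Tendsto (fun w => w - a) (𝓝[≠] a) (𝓝 0) :=
    tendsto_sub_nhds_zero_iff.mpr nhdsWithin_le_nhds
  simpa using hsub.mul (hf.tendsto.mono_left nhdsWithin_le_nhds)

lemma tendsto_sub_mul_div_of_hasDerivAt {f g : 𝕜 → 𝕜} {a g' : 𝕜} (hf : ContinuousAt f a)
    (hg : HasDerivAt g g' a) (hga : g a = 0) (hg' : g' ≠ 0) :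
    Tendsto (fun w => (w - a) * (f w / g w)) (𝓝[≠] a) (𝓝 (f a / g')) := by
  refine ((hf.tendsto.mono_left nhdsWithin_le_nhds).div hg.tendsto_slope hg').congr fun w => ?_
  rw [Pi.div_apply, slope_def_field, hga, sub_zero, div_div_eq_mul_div, mul_comm, mul_div_assoc]

end Residues

lemma tendsto_sub_mul_coth_sub_div {b c : ℂ} (hc : c ≠ 0) :
    Tendsto (fun w => (w - b) * coth ((w - b) / c)) (𝓝[≠] b) (𝓝 c) := by
  have hg : HasDerivAt (fun w => sinh ((w - b) / c)) (cosh ((b - b) / c) * (1 / c)) b :=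
    (hasDerivAt_sinh _).comp b (((hasDerivAt_id b).sub_const b).div_const c)
  have h := tendsto_sub_mul_div_of_hasDerivAt (f := fun w => cosh ((w - b) / c))
    (by fun_prop) hg (by simp) (by simpa using hc)
  simpa [coth] using h

lemma tendsto_sub_mul_sinh_two_mul_div {ω k a : ℂ} (hω : ω ≠ 0) (hsa : sinh a ≠ 0)
    (hca : cosh a ≠ 0) (ha : ω ^ 2 * sinh a ^ 2 + k ^ 2 = 0) :
    Tendsto (fun w => (w - a) * (I * ω ^ 2 * sinh (2 * w) / (ω ^ 2 * sinh w ^ 2 + k ^ 2)))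
      (𝓝[≠] a) (𝓝 I) := by
  have hg : HasDerivAt (fun w => ω ^ 2 * sinh w ^ 2 + k ^ 2)
      (ω ^ 2 * (2 * sinh a * cosh a)) a := by
    refine ((((hasDerivAt_sinh a).fun_pow 2).const_mul (ω ^ 2)).add_const (k ^ 2)).congr_deriv ?_
    push_cast
    ring
  have h := tendsto_sub_mul_div_of_hasDerivAt (f := fun w => I * ω ^ 2 * sinh (2 * w))
    (by fun_prop) hg ha (by simp [hω, hsa, hca])
  convert h using 2
  rw [sinh_two_mul]
  field_simp

section PoleAtNegAddPiI

variable {p₁ : ℂ}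

lemma residue_Q (hre : p₁.re ≠ 0) (m₁ m₂ m₃ : ℂ) :
    Tendsto (fun w => (w - (-p₁ + π * I)) *
        (((I - m₁) / 3) * coth ((w - p₁) / 3)
          - (m₂ / 3) * coth ((w - p₁ - π * I) / 3)
          - (m₃ / 3) * coth ((w - p₁ + π * I) / 3)
          - ((I - m₁) / 3) * coth ((w + p₁ - π * I) / 3)
          + (m₂ / 3) * coth ((w + p₁) / 3)
          + (m₃ / 3) * coth ((w + p₁ + π * I) / 3)))
      (𝓝[≠] (-p₁ + π * I)) (𝓝 (m₁ - I)) := by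
  have regular : ∀ l : ℂ → ℂ, Continuous l → sinh (l (-p₁ + π * I)) ≠ 0 →
      Tendsto (fun w => (w - (-p₁ + π * I)) * coth (l w))
        (𝓝[≠] (-p₁ + π * I)) (𝓝 0) :=
    fun l hl hs => tendsto_sub_mul_nhdsNE_zero ((continuousAt_coth hs).comp hl.continuousAt)
  have hre₂ : -p₁.re - p₁.re ≠ 0 := fun h => hre (by linarith)
  have t₁ := regular (fun w => (w - p₁) / 3) (by fun_prop)
    (sinh_ne_zero_of_re_ne_zero (by simpa using hre₂))
  have t₂ := regular (fun w => (w - p₁ - π * I) / 3) (by fun_prop)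
    (sinh_ne_zero_of_re_ne_zero (by simpa using hre₂))
  have t₃ := regular (fun w => (w - p₁ + π * I) / 3) (by fun_prop)
    (sinh_ne_zero_of_re_ne_zero (by simpa using hre₂))
  have t₅ := regular (fun w => (w + p₁) / 3) (by fun_prop) (by
    rw [show (-p₁ + π * I + p₁) / 3 = (π / 3 : ℝ) * I by push_cast; ring]
    exact sinh_ofReal_mul_I_ne_zero (by positivity) (by linarith [Real.pi_pos]))
  have t₆ := regular (fun w => (w + p₁ + π * I) / 3) (by fun_prop) (by
    rw [show (-p₁ + π * I + p₁ + π * I) / 3 = (2 * π / 3 : ℝ) * I by push_cast; ring]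
    exact sinh_ofReal_mul_I_ne_zero (by positivity) (by linarith [Real.pi_pos]))
  have t₄ : Tendsto (fun w => (w - (-p₁ + π * I)) * coth ((w + p₁ - π * I) / 3))
      (𝓝[≠] (-p₁ + π * I)) (𝓝 3) :=
    (tendsto_sub_mul_coth_sub_div three_ne_zero).congr fun w => by
      rw [show w + p₁ - π * I = w - (-p₁ + π * I) by ring]
  convert (((((t₁.const_mul ((I - m₁) / 3)).sub (t₂.const_mul (m₂ / 3))).sub
    (t₃.const_mul (m₃ / 3))).sub (t₄.const_mul ((I - m₁) / 3))).add
    (t₅.const_mul (m₂ / 3))).add (t₆.const_mul (m₃ / 3)) using 1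
  · funext w
    ring
  · congr 1
    ring

variable {ω : ℂ} {k : ℝ} (hp : sinh p₁ = I * k / ω) (hω : ω ≠ 0) (hc : cosh p₁ ≠ 0)
include hp hω hc

lemma residue_m (hs : sinh p₁ ≠ 0) :
    Tendsto (fun w => (w - (-p₁ + π * I)) * ((π + 2 * I * w) / (6 * π) *
        (I * ω ^ 2 * sinh (2 * w) / (ω ^ 2 * sinh w ^ 2 + (k : ℂ) ^ 2))))
      (𝓝[≠] (-p₁ + π * I)) (𝓝 (p₁ / (3 * π) - I / 6)) := by
  have hpole : ω ^ 2 * sinh (-p₁ + π * I) ^ 2 + (k : ℂ) ^ 2 = 0 := by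
    rw [sinh_neg_add_pi_mul_I, hp]
    field_simp
    linear_combination (k : ℂ) ^ 2 * I_sq
  have h := tendsto_sub_mul_sinh_two_mul_div hω (by rwa [sinh_neg_add_pi_mul_I])
    (by simpa [cosh_neg_add_pi_mul_I] using hc) hpole
  have hlin : Tendsto (fun w : ℂ => (π + 2 * I * w) / (6 * π)) (𝓝[≠] (-p₁ + π * I))
      (𝓝 ((π + 2 * I * (-p₁ + π * I)) / (6 * π))) :=
    (Continuous.tendsto (by fun_prop) _).mono_left nhdsWithin_le_nhds
  convert hlin.mul h using 2
  · ring
  · have hπ : (π : ℂ) ≠ 0 := ofReal_ne_zero.mpr Real.pi_ne_zero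
    field_simp
    linear_combination (6 * p₁ - 6 * π * I) * I_sq

lemma residue_G :
    Tendsto (fun w => (w - (-p₁ + π * I)) *
        (I * ω * sinh (w - 3 * π * I / 2) / (I * ω * sinh w + k)))
      (𝓝[≠] (-p₁ + π * I)) (𝓝 I) := by
  have hg : HasDerivAt (fun w => I * ω * sinh w + k) (I * ω * cosh (-p₁ + π * I))
      (-p₁ + π * I) :=
    ((hasDerivAt_sinh _).const_mul (I * ω)).add_const _
  have hpole : I * ω * sinh (-p₁ + π * I) + k = 0 := by
    rw [sinh_neg_add_pi_mul_I, hp]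
    field_simp
    linear_combination (k : ℂ) * I_sq
  have h := tendsto_sub_mul_div_of_hasDerivAt (f := fun w => I * ω * sinh (w - 3 * π * I / 2))
    (by fun_prop) hg hpole (by simp [hω, hc])
  convert h using 2
  rw [sinh_neg_add_pi_mul_I_sub_three_pi_mul_I_div_two, cosh_neg_add_pi_mul_I]
  field_simp

end PoleAtNegAddPiI

theorem residue_of_v1_at_minus_p1_plus_pi_i_general
    (ω : ℂ) (k : ℝ)
    (G : ℂ → ℂ)
    (hG : ∀ w : ℂ, G w = (I * ω * Complex.sinh (w - 3 * Real.pi * I / 2)) /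
      (I * ω * Complex.sinh w + k))
    (G₂ m : ℂ → ℂ)
    (hG₂ : ∀ w : ℂ, G₂ w = I * ω ^ 2 * Complex.sinh (2 * w) /
      (ω ^ 2 * (Complex.sinh w) ^ 2 + (k : ℂ) ^ 2))
    (hm : ∀ w : ℂ, m w = ((Real.pi + 2 * I * w) / (6 * Real.pi)) * G₂ w)
    (p₁ : ℂ) (hp : Complex.sinh p₁ = I * k / ω) (hc : Complex.cosh p₁ ≠ 0)
    (hre : p₁.re ≠ 0)
    (m₁ m₂ m₃ : ℂ)
    (hm₁ : m₁ = -p₁ / (3 * Real.pi) + I / 6)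
    (Q : ℂ → ℂ)
    (hQ : ∀ w : ℂ, Q w =
      ((I - m₁) / 3) * Complex.coth ((w - p₁) / 3)
      - (m₂ / 3) * Complex.coth ((w - p₁ - Real.pi * I) / 3)
      - (m₃ / 3) * Complex.coth ((w - p₁ + Real.pi * I) / 3)
      - ((I - m₁) / 3) * Complex.coth ((w + p₁ - Real.pi * I) / 3)
      + (m₂ / 3) * Complex.coth ((w + p₁) / 3)
      + (m₃ / 3) * Complex.coth ((w + p₁ + Real.pi * I) / 3)) :
    Tendsto (fun w => (w - (-p₁ + Real.pi * I)) * (m w + Q w - G w))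
      (𝓝[≠] (-p₁ + Real.pi * I)) (𝓝 (-2 * I)) := by
  have hs : sinh p₁ ≠ 0 := sinh_ne_zero_of_re_ne_zero hre
  have hω : ω ≠ 0 := by
    rintro rfl
    exact hs (by simpa using hp)
  have hresidues : -2 * I = (p₁ / (3 * π) - I / 6) + (m₁ - I) - I := by
    rw [hm₁]
    ring
  rw [hresidues]
  refine (((residue_m hp hω hc hs).add (residue_Q hre m₁ m₂ m₃)).sub
    (residue_G hp hω hc)).congr fun w => ?_
  rw [hm, hG₂, hQ, hG]
  ring

theorem residue_of_v1_at_minus_p1_plus_pi_i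
    (ω : ℂ) (hω : 0 < ω.im) (k : ℝ) (hk : 0 < k)
    (G : ℂ → ℂ)
    (hG : ∀ w : ℂ, G w = (I * ω * Complex.sinh (w - 3 * Real.pi * I / 2)) /
      (I * ω * Complex.sinh w + k))
    (G₂ m : ℂ → ℂ)
    (hG₂ : ∀ w : ℂ, G₂ w = I * ω ^ 2 * Complex.sinh (2 * w) /
      (ω ^ 2 * (Complex.sinh w) ^ 2 + (k : ℂ) ^ 2))
    (hm : ∀ w : ℂ, m w = ((Real.pi + 2 * I * w) / (6 * Real.pi)) * G₂ w)
    (p₁ : ℂ) (hp : Complex.sinh p₁ = I * k / ω) (hc : Complex.cosh p₁ ≠ 0)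
    (hre : p₁.re ≠ 0)
    (m₁ m₂ m₃ : ℂ)
    (hm₁ : m₁ = -p₁ / (3 * Real.pi) + I / 6)
    (hm₂ : m₂ = -p₁ / (3 * Real.pi) - I / 6)
    (hm₃ : m₃ = -p₁ / (3 * Real.pi) + I / 2)
    (Q : ℂ → ℂ)
    (hQ : ∀ w : ℂ, Q w =
      ((I - m₁) / 3) * Complex.coth ((w - p₁) / 3)
      - (m₂ / 3) * Complex.coth ((w - p₁ - Real.pi * I) / 3)
      - (m₃ / 3) * Complex.coth ((w - p₁ + Real.pi * I) / 3)
      - ((I - m₁) / 3) * Complex.coth ((w + p₁ - Real.pi * I) / 3)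
      + (m₂ / 3) * Complex.coth ((w + p₁) / 3)
      + (m₃ / 3) * Complex.coth ((w + p₁ + Real.pi * I) / 3)) :
    Tendsto (fun w => (w - (-p₁ + Real.pi * I)) * (m w + Q w - G w))
      (𝓝[≠] (-p₁ + Real.pi * I)) (𝓝 (-2 * I)) :=
  residue_of_v1_at_minus_p1_plus_pi_i_general ω k G hG G₂ m hG₂ hm p₁ hp hc hre m₁ m₂ m₃ hm₁ Q hQ
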